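/- Let G = (V, E) be a graph with a linear order < on E and let f be a function from subsets of E into a commutative monoid. Then Σ_{F = (V,A_f) spanning forest} Σ_{A_i ⊆ E_i(F)} Σ_{A_e ⊆ E_e(F)} f((A_f \ A_i) ∪ A_e) = Σ_{A ⊆ E} f(A). -/

import Mathlib

open Finset

attribute [local instance] Classical.propDecidable

/-- A multigraph on vertex type `V` with edge index type `E` is given by a map
`ends : E → Sym2 V` (loops and parallel edges are allowed).  For an edge subset
`A ⊆ E`, `edgeGraph ends A` is the simple graph on `V` whose adjacency is
witnessed by some edge of `A`; it determines the connected components of the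
spanning subgraph `(V, A)`. -/
def edgeGraph {V E : Type} (ends : E → Sym2 V) (A : Finset E) : SimpleGraph V where
  Adj a b := a ≠ b ∧ ∃ e ∈ A, ends e = s(a, b)
  symm := by
    constructor
    rintro a b ⟨hab, e, he, hs⟩
    exact ⟨Ne.symm hab, e, he, by rw [hs, Sym2.eq_swap]⟩
  loopless := by constructor; rintro a ⟨h, -⟩; exact h rfl

/-- `kc ends A` is the number of connected components of the spanning subgraph `(V, A)`. -/
noncomputable def kc {V E : Type} (ends : E → Sym2 V) (A : Finset E) : ℕ :=
  Nat.card (edgeGraph ends A).ConnectedComponent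

/-- `(V, A)` is a spanning forest of `(V, E)`: it is a forest
(`|A| + k((V,A)) = |V|`, which rules out loops, parallel edges and cycles)
with as many connected components as the whole graph. -/
def IsSpanningForest {V E : Type} [Fintype V] [Fintype E] (ends : E → Sym2 V)
    (A : Finset E) : Prop :=
  A.card + kc ends A = Fintype.card V ∧ kc ends A = kc ends Finset.univ

/-- `F - e + f`. -/
def swapEdge {E : Type} [DecidableEq E] (A : Finset E) (e f : E) : Finset E :=
  insert f (A.erase e)

/-- `e` is internally active in the spanning forest `(V, A)`. -/
def InternallyActive {V E : Type} [Fintype V] [Fintype E] [DecidableEq E] [LinearOrder E]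
    (ends : E → Sym2 V) (A : Finset E) (e : E) : Prop :=
  e ∈ A ∧ ¬ ∃ f, f ∉ A ∧ e < f ∧ IsSpanningForest ends (swapEdge A e f)

/-- `f` is externally active in the spanning forest `(V, A)`. -/
def ExternallyActive {V E : Type} [Fintype V] [Fintype E] [DecidableEq E] [LinearOrder E]
    (ends : E → Sym2 V) (A : Finset E) (f : E) : Prop :=
  f ∉ A ∧ ¬ ∃ e, e ∈ A ∧ f < e ∧ IsSpanningForest ends (swapEdge A e f)

/-- The set `E_i(F)` of internally active edges of the spanning forest `F = (V, A)`. -/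
noncomputable def intAct {V E : Type} [Fintype V] [Fintype E] [DecidableEq E] [LinearOrder E]
    (ends : E → Sym2 V) (A : Finset E) : Finset E :=
  Finset.univ.filter (InternallyActive ends A)

/-- The set `E_e(F)` of externally active edges of the spanning forest `F = (V, A)`. -/
noncomputable def extAct {V E : Type} [Fintype V] [Fintype E] [DecidableEq E] [LinearOrder E]
    (ends : E → Sym2 V) (A : Finset E) : Finset E :=
  Finset.univ.filter (ExternallyActive ends A)

/-!
Forests of the multigraph are the independent sets of a matroid on `E` whose bases are the
spanning forests. Given `A ⊆ E`, reorder the edges so that those of `A` come first, increasingly,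
followed by the others, decreasingly (`activityKey A`). A spanning forest `F` satisfies
`F \ A ⊆ E_i(F)` and `A \ F ⊆ E_e(F)` exactly when no exchange `F - e + f` of spanning forests
moves to a smaller edge in this order, and in a finite matroid with injective weights exactly one
base admits no weight-lowering exchange: the base whose weight set is colex-minimal, unique
because the fundamental circuit of any other element lies below that element. So the intervals
`[F \ E_i(F), F ∪ E_e(F)]` partition the subsets of `E`.
-/

namespace SimpleGraph

variable {V α : Type*} {G H : SimpleGraph V} {u v : V}

lemma Reachable.eq_of_forall_adj_eq {g : V → α} (hg : ∀ x y, G.Adj x y → g x = g y)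
    (h : G.Reachable u v) : g u = g v := by
  obtain ⟨p⟩ := h
  induction p with
  | nil => rfl
  | cons hadj _ ih => exact (hg _ _ hadj).trans ih

lemma Reachable.of_forall_adj_reachable (hGH : ∀ x y, H.Adj x y → G.Reachable x y)
    (h : H.Reachable u v) : G.Reachable u v :=
  ConnectedComponent.exact <|
    h.eq_of_forall_adj_eq fun x y hxy => ConnectedComponent.sound (hGH x y hxy)

end SimpleGraph

namespace Matroid

variable {α β : Type*} [DecidableEq α] [LinearOrder β] {M : Matroid α} {w : α → β}
  {B B' : Finset α} {m : α}

def IsSwapMinBase (M : Matroid α) (w : α → β) (B : Finset α) : Prop :=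
  M.IsBase ↑B ∧ ∀ e ∈ B, ∀ f ∉ B, M.IsBase ↑(insert f (B.erase e)) → w e < w f

lemma IsSwapMinBase.fundCircuit_subset (hB : M.IsSwapMinBase w B) (hmB : m ∉ B) (hm : m ∈ M.E) :
    M.fundCircuit m ↑B ⊆ insert m ↑(B.filter (w · < w m)) := by
  intro x hx
  obtain rfl | hxm := eq_or_ne x m
  · exact Set.mem_insert x _
  have hxB : x ∈ B := ((M.fundCircuit_subset_insert m ↑B hx).resolve_left hxm)
  have hcl : m ∈ M.closure ↑B := by rwa [hB.1.closure_eq]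
  have hswap := hB.1.exchange_isBase_of_indep' hxB (mod_cast hmB)
    ((hB.1.indep.mem_fundCircuit_iff hcl (mod_cast hmB)).mp hx)
  rw [← Set.insert_sdiff_singleton_comm hxm.symm, ← coe_erase, ← coe_insert] at hswap
  exact Set.mem_insert_of_mem _ (mem_filter.mpr ⟨hxB, hB.2 x hxB m hmB hswap⟩)

lemma IsSwapMinBase.mem_of_forall_lt_mem (hB : M.IsSwapMinBase w B) (hB' : M.Indep ↑B')
    (hm : m ∈ B') (h : ∀ x ∈ B, w x < w m → x ∈ B') : m ∈ B := by
  by_contra hmB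
  refine (hB.1.fundCircuit_isCircuit (hB'.subset_ground hm) (mod_cast hmB)).not_indep
    (hB'.subset ((hB.fundCircuit_subset hmB (hB'.subset_ground hm)).trans ?_))
  simpa [Set.insert_subset_iff, hm, Set.subset_def] using h

lemma IsSwapMinBase.unique (hB : M.IsSwapMinBase w B) (hB' : M.IsSwapMinBase w B') : B = B' := by
  by_contra hne
  obtain ⟨m, hmD, hmin⟩ := (symmDiff B B').exists_min_image w (symmDiff_nonempty.mpr hne)
  wlog hm : m ∈ B' ∧ m ∉ B generalizing B B'
  · rw [symmDiff_comm] at hmD hmin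
    exact this hB' hB (Ne.symm hne) hmD hmin ((mem_symmDiff.mp hmD).resolve_left hm)
  refine hm.2 (hB.mem_of_forall_lt_mem hB'.1.indep hm.1 fun x hx hxm => ?_)
  by_contra hxB'
  exact (hmin x (mem_symmDiff.mpr (Or.inl ⟨hx, hxB'⟩))).not_gt hxm

lemma exists_isSwapMinBase [Fintype α] (M : Matroid α) (hw : Function.Injective w) :
    ∃ B, M.IsSwapMinBase w B := by
  obtain ⟨B₀, hB₀⟩ := M.exists_isBase
  -- a base whose image under `w` is colex-minimal admits no weight-lowering exchange
  obtain ⟨B, hB, hmin⟩ := (univ.filter fun B : Finset α => M.IsBase ↑B).exists_min_image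
    (fun B => toColex (B.map ⟨w, hw⟩)) ⟨B₀.toFinite.toFinset, by simpa⟩
  refine ⟨B, (mem_filter.mp hB).2, fun e he f hf hswap => ?_⟩
  have hef : e ≠ f := ne_of_mem_of_not_mem he hf
  by_contra! hfe
  refine (hmin _ (mem_filter.mpr ⟨mem_univ _, hswap⟩)).not_gt ?_
  rw [Colex.toColex_lt_toColex_iff_exists_forall_lt]
  refine ⟨w e, mem_map_of_mem _ he, ?_, ?_⟩
  · simp [hw.eq_iff, hef]
  · simp only [mem_map, Function.Embedding.coeFn_mk, mem_insert, mem_erase]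
    rintro _ ⟨x, rfl | ⟨-, hx⟩, rfl⟩ hxB
    · exact (hfe.lt_of_ne (hw.ne hef).symm)
    · exact absurd ⟨x, hx, rfl⟩ hxB

lemma existsUnique_isSwapMinBase [Fintype α] (M : Matroid α) (hw : Function.Injective w) :
    ∃! B, M.IsSwapMinBase w B :=
  let ⟨B, hB⟩ := exists_isSwapMinBase M hw
  ⟨B, hB, fun _ hB' => hB'.unique hB⟩

end Matroid

namespace Finset

variable {ι κ α M : Type*} [AddCommMonoid M]

lemma sum_sum_filter_of_existsUnique {s : Finset ι} {t : Finset κ} {P : ι → κ → Prop}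
    [∀ i, DecidablePred (P i)] (h : ∀ a ∈ t, ∃! i, i ∈ s ∧ P i a) (g : κ → M) :
    ∑ i ∈ s, ∑ a ∈ t with P i a, g a = ∑ a ∈ t, g a := by
  rw [sum_comm' (t' := t) (s' := fun a => s.filter (P · a)) (by simp only [mem_filter]; tauto)]
  refine sum_congr rfl fun a ha => ?_
  rw [sum_const, card_eq_one.mpr ?_, one_smul]
  obtain ⟨i, hi, hi'⟩ := h a ha
  exact ⟨i, eq_singleton_iff_unique_mem.mpr
    ⟨mem_filter.mpr hi, fun j hj => hi' j (mem_filter.mp hj)⟩⟩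

lemma sum_powerset_sum_powerset_sdiff_union [Fintype α] [DecidableEq α] {F I X : Finset α}
    (hI : I ⊆ F) (hX : Disjoint X F) (g : Finset α → M) :
    ∑ Ai ∈ I.powerset, ∑ Ae ∈ X.powerset, g (F \ Ai ∪ Ae) =
      ∑ A with F \ A ⊆ I ∧ A \ F ⊆ X, g A := by
  have hinv : ∀ Ai ⊆ I, ∀ Ae ⊆ X,
      F \ (F \ Ai ∪ Ae) = Ai ∧ (F \ Ai ∪ Ae) \ F = Ae := by
    intro Ai hAi Ae hAe
    have hAiF : ∀ x ∈ Ai, x ∈ F := fun x hx => hI (hAi hx)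
    have hAeF : ∀ x ∈ Ae, x ∉ F := fun x hx => disjoint_left.mp hX (hAe hx)
    constructor <;> ext x <;> have := hAiF x <;> have := hAeF x <;>
      simp only [mem_sdiff, mem_union] <;> tauto
  rw [← sum_product']
  refine sum_nbij' (fun p => F \ p.1 ∪ p.2) (fun A => (F \ A, A \ F)) ?_ ?_ ?_ ?_ (fun _ _ => rfl)
  all_goals simp only [mem_product, mem_powerset, mem_filter, mem_univ, true_and, Prod.ext_iff]
  · rintro ⟨Ai, Ae⟩ ⟨hAi, hAe⟩
    rw [(hinv Ai hAi Ae hAe).1, (hinv Ai hAi Ae hAe).2]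
    exact ⟨hAi, hAe⟩
  · exact fun _ => id
  · exact fun ⟨Ai, Ae⟩ ⟨hAi, hAe⟩ => hinv Ai hAi Ae hAe
  · intro A _
    ext x
    simp only [mem_sdiff, mem_union]
    tauto

end Finset

open SimpleGraph

section Components

variable {V E : Type} (ends : E → Sym2 V) {A B : Finset E} {e : E} {a b : V}

lemma edgeGraph_mono (h : A ⊆ B) : edgeGraph ends A ≤ edgeGraph ends B :=
  fun _ _ ⟨hab, e, he, hs⟩ => ⟨hab, e, h he, hs⟩

lemma edgeGraph_reachable_of_mem (he : e ∈ A) (hab : ends e = s(a, b)) :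
    (edgeGraph ends A).Reachable a b := by
  obtain rfl | hne := eq_or_ne a b
  · rfl
  · exact Adj.reachable ⟨hne, e, he, hab⟩

lemma kc_eq_of_forall_reachable (hAB : A ⊆ B)
    (h : ∀ e ∈ B, ∀ a b, ends e = s(a, b) → (edgeGraph ends A).Reachable a b) :
    kc ends B = kc ends A := by
  refine (Nat.card_eq_of_bijective
    (ConnectedComponent.map (Hom.ofLE (edgeGraph_mono ends hAB)))
    ⟨fun c c' => ?_, ConnectedComponent.surjective_map_ofLE _⟩).symm
  induction c using ConnectedComponent.ind
  induction c' using ConnectedComponent.ind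
  intro hcc'
  refine ConnectedComponent.sound <| (ConnectedComponent.exact hcc').of_forall_adj_reachable ?_
  rintro x y ⟨-, e, he, hxy⟩
  exact h e he x y hxy

lemma kc_insert_of_reachable [DecidableEq E] (hab : ends e = s(a, b))
    (h : (edgeGraph ends A).Reachable a b) : kc ends (insert e A) = kc ends A := by
  refine kc_eq_of_forall_reachable ends (subset_insert e A) fun e' he' x y hxy => ?_
  rcases mem_insert.mp he' with rfl | he'
  · rcases Sym2.eq_iff.mp (hxy.symm.trans hab) with ⟨rfl, rfl⟩ | ⟨rfl, rfl⟩
    exacts [h, h.symm]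
  · exact edgeGraph_reachable_of_mem ends he' hxy

variable [Fintype V]

lemma kc_anti (h : A ⊆ B) : kc ends B ≤ kc ends A :=
  ConnectedComponent.card_le_card_of_le (edgeGraph_mono ends h)

lemma kc_empty : kc ends (∅ : Finset E) = Fintype.card V := by
  rw [← Nat.card_eq_fintype_card]
  refine (Nat.card_eq_of_bijective _
    ⟨fun u v huv => ?_, fun c => c.ind fun v => ⟨v, rfl⟩⟩).symm
  obtain ⟨p⟩ := ConnectedComponent.exact huv
  cases p with
  | nil => rfl
  | cons hadj _ => obtain ⟨-, e, he, -⟩ := hadj; simp at he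

lemma kc_eq_kc_insert_add_one [DecidableEq E] (hab : ends e = s(a, b))
    (h : ¬ (edgeGraph ends A).Reachable a b) :
    kc ends A = kc ends (insert e A) + 1 := by
  set G := edgeGraph ends A
  have hle := edgeGraph_mono ends (subset_insert e A)
  have hab' : G.connectedComponentMk a ≠ G.connectedComponentMk b :=
    fun hc => h (ConnectedComponent.exact hc)
  -- the components of `insert e A` are those of `A`, with the components of `a` and `b` merged
  let merge (c : G.ConnectedComponent) : G.ConnectedComponent :=
    if c = G.connectedComponentMk b then G.connectedComponentMk a else c
  have hmerge : ∀ x y, (edgeGraph ends (insert e A)).Adj x y →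
      merge (G.connectedComponentMk x) = merge (G.connectedComponentMk y) := by
    rintro x y ⟨-, e', he', hxy⟩
    rcases mem_insert.mp he' with rfl | he'
    · rcases Sym2.eq_iff.mp (hxy.symm.trans hab) with ⟨rfl, rfl⟩ | ⟨rfl, rfl⟩ <;>
        simp [merge]
    · rw [ConnectedComponent.sound (edgeGraph_reachable_of_mem ends he' hxy)]
  have hbij : Function.Bijective
      fun c : {c : G.ConnectedComponent // c ≠ G.connectedComponentMk b} =>
        c.1.map (Hom.ofLE hle) := by
    refine ⟨fun ⟨c, hc⟩ ⟨c', hc'⟩ hcc' => ?_, fun c => ?_⟩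
    · induction c using ConnectedComponent.ind
      induction c' using ConnectedComponent.ind
      have := (ConnectedComponent.exact hcc').eq_of_forall_adj_eq hmerge
      simp_all [merge]
    · induction c using ConnectedComponent.ind with | h v => ?_
      by_cases hv : G.connectedComponentMk v = G.connectedComponentMk b
      · refine ⟨⟨_, hab'⟩, ConnectedComponent.sound ?_⟩
        exact (edgeGraph_reachable_of_mem ends (mem_insert_self e A) hab).trans
          ((ConnectedComponent.exact hv).symm.map (Hom.ofLE hle))
      · exact ⟨⟨_, hv⟩, rfl⟩
  rw [kc, kc, ← Nat.card_eq_of_bijective _ hbij, ← Finite.card_option,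
    Nat.card_congr (Equiv.optionSubtypeNe _)]

end Components

section Forests

variable {V E : Type} [Fintype V] (ends : E → Sym2 V) {A B : Finset E} {e : E}

def IsForest (A : Finset E) : Prop := A.card + kc ends A = Fintype.card V

lemma isForest_empty : IsForest ends (∅ : Finset E) := by
  simp [IsForest, kc_empty]

variable [DecidableEq E]

lemma kc_le_kc_insert_add_one (e : E) (A : Finset E) : kc ends A ≤ kc ends (insert e A) + 1 := by
  induction hab : ends e using Sym2.ind with | h a b => ?_
  by_cases h : (edgeGraph ends A).Reachable a b
  · rw [kc_insert_of_reachable ends hab h]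
    omega
  · rw [kc_eq_kc_insert_add_one ends hab h]

lemma kc_le_kc_union_add_card (A C : Finset E) : kc ends A ≤ kc ends (A ∪ C) + C.card := by
  induction C using Finset.induction with
  | empty => simp
  | insert e C he ih =>
    have := kc_le_kc_insert_add_one ends e (A ∪ C)
    rw [union_insert, card_insert_of_notMem he]
    omega

lemma card_le_card_add_kc (A : Finset E) : Fintype.card V ≤ A.card + kc ends A := by
  simpa [kc_empty, add_comm] using kc_le_kc_union_add_card ends ∅ A

lemma IsForest.subset (hA : IsForest ends A) (hBA : B ⊆ A) : IsForest ends B := by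
  have h₁ := card_le_card_add_kc ends B
  have h₂ := kc_le_kc_union_add_card ends B (A \ B)
  have h₃ := card_sdiff_add_card_eq_card hBA
  rw [union_sdiff_of_subset hBA] at h₂
  unfold IsForest at *
  omega

lemma IsForest.reachable_of_not_isForest_insert {a b : V} (hA : IsForest ends A)
    (he : ¬ IsForest ends (insert e A)) (hab : ends e = s(a, b)) :
    (edgeGraph ends A).Reachable a b := by
  by_cases heA : e ∈ A
  · exact edgeGraph_reachable_of_mem ends heA hab
  by_contra h
  have := kc_eq_kc_insert_add_one ends hab h
  have := card_insert_of_notMem heA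
  unfold IsForest at *
  omega

lemma IsForest.kc_eq_of_forall_not_isForest_insert (hA : IsForest ends A) (hAB : A ⊆ B)
    (h : ∀ e ∈ B, e ∉ A → ¬ IsForest ends (insert e A)) : kc ends B = kc ends A := by
  refine kc_eq_of_forall_reachable ends hAB fun e he a b hab => ?_
  by_cases heA : e ∈ A
  · exact edgeGraph_reachable_of_mem ends heA hab
  · exact hA.reachable_of_not_isForest_insert ends (h e he heA) hab

lemma IsForest.exists_insert_of_card_lt (hA : IsForest ends A) (hB : IsForest ends B)
    (hAB : A.card < B.card) : ∃ e ∈ B, e ∉ A ∧ IsForest ends (insert e A) := by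
  by_contra! h
  have h₁ := hA.kc_eq_of_forall_not_isForest_insert ends subset_union_left
    fun e he heA => h e ((mem_union.mp he).resolve_left heA) heA
  have h₂ := kc_anti ends (subset_union_right (s₁ := A) (s₂ := B))
  unfold IsForest at hA hB
  omega

lemma isSpanningForest_iff [Fintype E] :
    IsSpanningForest ends A ↔ IsForest ends A ∧ ∀ e ∉ A, ¬ IsForest ends (insert e A) := by
  refine ⟨fun ⟨hA, hkc⟩ => ⟨hA, fun e he he' => ?_⟩, fun ⟨hA, h⟩ => ⟨hA, ?_⟩⟩
  · have := kc_anti ends (subset_univ (insert e A))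
    have := card_insert_of_notMem he
    unfold IsForest at *
    omega
  · exact (hA.kc_eq_of_forall_not_isForest_insert ends (subset_univ A) fun e _ => h e).symm

end Forests

section GraphicMatroid

variable {V E : Type} [Fintype V] [DecidableEq E] (ends : E → Sym2 V) {A : Finset E}

def graphicMatroid : Matroid E :=
  (IndepMatroid.ofFinset Set.univ (IsForest ends) (isForest_empty ends)
    (fun _ _ hJ hIJ => hJ.subset ends hIJ)
    (fun _ _ hI hJ hIJ => hI.exists_insert_of_card_lt ends hJ hIJ)
    (fun _ _ => Set.subset_univ _)).matroid

lemma graphicMatroid_indep_coe_iff : (graphicMatroid ends).Indep ↑A ↔ IsForest ends A := by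
  simp [graphicMatroid]

lemma graphicMatroid_isBase_coe_iff [Fintype E] :
    (graphicMatroid ends).IsBase ↑A ↔ IsSpanningForest ends A := by
  rw [isSpanningForest_iff]
  refine ⟨fun h => ⟨(graphicMatroid_indep_coe_iff ends).mp h.indep, fun e he he' => ?_⟩,
    fun ⟨hA, h⟩ => ((graphicMatroid_indep_coe_iff ends).mpr hA).isBase_of_forall_insert ?_⟩
  · rw [← graphicMatroid_indep_coe_iff, coe_insert] at he'
    exact he (h.mem_of_insert_indep he')
  · rintro e ⟨-, he⟩
    rw [← coe_insert, graphicMatroid_indep_coe_iff]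
    exact h e he

end GraphicMatroid

section Activity

variable {E : Type} [LinearOrder E] {A : Finset E} {e f : E}

noncomputable def activityKey (A : Finset E) (x : E) : E ⊕ₗ Eᵒᵈ :=
  toLex (if x ∈ A then .inl x else .inr (OrderDual.toDual x))

lemma activityKey_injective (A : Finset E) : Function.Injective (activityKey A) := by
  intro x y h
  by_cases hx : x ∈ A <;> by_cases hy : y ∈ A <;> simp_all [activityKey]

lemma activityKey_lt_activityKey_iff (hef : e ≠ f) :
    activityKey A e < activityKey A f ↔ ¬ ((e ∉ A ∧ e < f) ∨ (f ∈ A ∧ f < e)) := by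
  by_cases he : e ∈ A <;> by_cases hf : f ∈ A <;>
    simp [activityKey, he, hf, hef, hef.le_iff_lt, hef.symm.le_iff_lt]

end Activity

section ActivityDecomposition

variable {V E : Type} [Fintype V] [Fintype E] [DecidableEq E] [LinearOrder E]
  (ends : E → Sym2 V) {A F : Finset E}

lemma intAct_subset : intAct ends F ⊆ F := fun _ he => (mem_filter.mp he).2.1

lemma disjoint_extAct : Disjoint (extAct ends F) F :=
  disjoint_left.mpr fun _ he => (mem_filter.mp he).2.1

lemma isSwapMinBase_activityKey_iff :
    (graphicMatroid ends).IsSwapMinBase (activityKey A) F ↔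
      IsSpanningForest ends F ∧ F \ A ⊆ intAct ends F ∧ A \ F ⊆ extAct ends F := by
  simp only [Matroid.IsSwapMinBase, graphicMatroid_isBase_coe_iff]
  refine and_congr_right fun _ =>
    ⟨fun h => ⟨fun e he => ?_, fun f hf => ?_⟩, fun ⟨hi, hx⟩ => ?_⟩
  · obtain ⟨heF, heA⟩ := mem_sdiff.mp he
    refine mem_filter.mpr ⟨mem_univ e, heF, fun ⟨f, hfF, hef, hswap⟩ => ?_⟩
    exact (activityKey_lt_activityKey_iff (ne_of_mem_of_not_mem heF hfF)).mp
      (h e heF f hfF hswap) (.inl ⟨heA, hef⟩)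
  · obtain ⟨hfA, hfF⟩ := mem_sdiff.mp hf
    refine mem_filter.mpr ⟨mem_univ f, hfF, fun ⟨e, heF, hfe, hswap⟩ => ?_⟩
    exact (activityKey_lt_activityKey_iff (ne_of_mem_of_not_mem heF hfF)).mp
      (h e heF f hfF hswap) (.inr ⟨hfA, hfe⟩)
  · intro e heF f hfF hswap
    rw [activityKey_lt_activityKey_iff (ne_of_mem_of_not_mem heF hfF)]
    rintro (⟨heA, hef⟩ | ⟨hfA, hfe⟩)
    · exact (mem_filter.mp (hi (mem_sdiff.mpr ⟨heF, heA⟩))).2.2 ⟨f, hfF, hef, hswap⟩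
    · exact (mem_filter.mp (hx (mem_sdiff.mpr ⟨hfA, hfF⟩))).2.2 ⟨e, heF, hfe, hswap⟩

end ActivityDecomposition

/-- Summation form of the activity bijection: for any function `f`
from edge subsets into a commutative monoid,
`∑_F ∑_{A_i ⊆ E_i(F)} ∑_{A_e ⊆ E_e(F)} f((A_f \ A_i) ∪ A_e) = ∑_{A ⊆ E} f(A)`. -/
theorem activity_sum_formula {V E M : Type} [Fintype V] [Fintype E] [DecidableEq E]
    [LinearOrder E] [AddCommMonoid M] (ends : E → Sym2 V) (f : Finset E → M) :
    ∑ F ∈ Finset.univ.powerset.filter (IsSpanningForest ends),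
        ∑ Ai ∈ (intAct ends F).powerset,
          ∑ Ae ∈ (extAct ends F).powerset, f ((F \ Ai) ∪ Ae) =
      ∑ A ∈ (Finset.univ : Finset E).powerset, f A := by
  have hunique (A : Finset E) : ∃! F, F ∈ univ.powerset.filter (IsSpanningForest ends) ∧
      F \ A ⊆ intAct ends F ∧ A \ F ⊆ extAct ends F := by
    refine (existsUnique_congr fun F => ?_).mp
      ((graphicMatroid ends).existsUnique_isSwapMinBase (activityKey_injective A))
    simp [isSwapMinBase_activityKey_iff]
  calc _ = ∑ F ∈ univ.powerset.filter (IsSpanningForest ends),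
        ∑ A with F \ A ⊆ intAct ends F ∧ A \ F ⊆ extAct ends F, f A :=
      sum_congr rfl fun F _ =>
        sum_powerset_sum_powerset_sdiff_union (intAct_subset ends) (disjoint_extAct ends) f
    _ = _ := by rw [sum_sum_filter_of_existsUnique fun A _ => hunique A, powerset_univ]
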